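/- arXiv:1912.10403 — 4 statements merged into one kernel-verified Lean document; each statement's English description precedes it below -/
import Mathlib

section
/- Let p ≥ 1 be an integer, and let F(λ) = μ·∏_{i=1}^{p}(λ − α_i) and G(λ) = ν·∏_{i=1}^{p}(λ − β_i) be real polynomials of degree p with μ, ν ≠ 0, α_1 < ⋯ < α_p, β_1 < ⋯ < β_p, G ≪ F, and |μ| > |ν|. Then F − G has p distinct real roots γ_1 < ⋯ < γ_p satisfying γ_i ∈ (α_i, β_{i+1}) for i = 1,…,p−1 and γ_p > α_p. -/
open Polynomial Finset

/-!
Write `H = F - G`. Since `F` vanishes at the `α i` and `G` at the `β i`, the sign of `H` at these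
points is read off from the other product, and interlacing makes `H (α i)` and `H (β (i + 1))`
differ in sign, so `H` has a root in each gap `(α i, β (i + 1))`. At `α (p - 1)`, which exceeds
every `β j`, `H` has the sign of `-ν`, while at `+∞` it has that of the leading coefficient
`μ - ν`, which `|ν| < |μ|` makes agree with `ν`: one more root lies beyond `α (p - 1)`. These
`p` distinct roots of the degree-`p` polynomial `H` give its factorisation.
-/

theorem exists_mem_Ioo_eq_zero_of_mul_neg {α : Type*} [ConditionallyCompleteLinearOrder α]
    [TopologicalSpace α] [OrderTopology α] [DenselyOrdered α] {f : α → ℝ} {a b : α}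
    (hab : a ≤ b) (hf : ContinuousOn f (Set.Icc a b)) (h : f a * f b < 0) :
    ∃ x ∈ Set.Ioo a b, f x = 0 := by
  rcases mul_neg_iff.mp h with ⟨ha, hb⟩ | ⟨ha, hb⟩
  · exact intermediate_value_Ioo' hab hf ⟨hb, ha⟩
  · exact intermediate_value_Ioo hab hf ⟨ha, hb⟩

namespace Polynomial

theorem exists_gt_isRoot_of_eval_neg {P : ℝ[X]} (hP : 0 < P.leadingCoeff) {a : ℝ}
    (ha : P.eval a < 0) : ∃ x, a < x ∧ P.IsRoot x := by
  have hdeg : 0 < P.degree := by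
    by_contra! h
    rw [eq_C_of_degree_le_zero h, eval_C] at ha
    rw [eq_C_of_degree_le_zero h, leadingCoeff_C] at hP
    linarith
  obtain ⟨b, hb, hab⟩ := (((P.tendsto_atTop_of_leadingCoeff_nonneg hdeg hP.le).eventually_gt_atTop
    0).and (Filter.eventually_gt_atTop a)).exists
  obtain ⟨x, hx, hx0⟩ := intermediate_value_Ioo hab.le P.continuous.continuousOn ⟨ha, hb⟩
  exact ⟨x, hx.1, hx0⟩

theorem exists_gt_isRoot_of_eval_mul_leadingCoeff_neg {P : ℝ[X]} {a : ℝ}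
    (h : P.eval a * P.leadingCoeff < 0) : ∃ x, a < x ∧ P.IsRoot x := by
  rcases mul_neg_iff.mp h with ⟨ha, hP⟩ | ⟨ha, hP⟩
  · simpa using exists_gt_isRoot_of_eval_neg (P := -P) (by simpa using hP) (by simpa using ha)
  · exact exists_gt_isRoot_of_eval_neg hP ha

theorem eq_C_leadingCoeff_mul_prod_X_sub_C {K ι : Type*} [Field K] [Fintype ι] {P : K[X]}
    {γ : ι → K} (hγ : Function.Injective γ) (hroot : ∀ i, P.IsRoot (γ i))
    (hdeg : P.natDegree ≤ Fintype.card ι) : P = C P.leadingCoeff * ∏ i, (X - C (γ i)) :=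
  eq_leadingCoeff_mul_of_monic_of_dvd_of_natDegree_le (monic_prod_X_sub_C _ _)
    (Fintype.prod_dvd_of_coprime (pairwise_coprime_X_sub_C hγ) fun i => dvd_iff_isRoot.mpr (hroot i))
    (by simpa using hdeg)

section

variable {R : Type*} [CommRing R] {f g : R[X]} {n : ℕ}

theorem coeff_C_mul_sub_C_mul_of_monic (hf : f.Monic) (hg : g.Monic) (hfn : f.natDegree = n)
    (hgn : g.natDegree = n) (a b : R) : (C a * f - C b * g).coeff n = a - b := by
  subst hfn
  rw [coeff_sub, coeff_C_mul, coeff_C_mul, hf.coeff_natDegree, ← hgn, hg.coeff_natDegree,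
    mul_one, mul_one]

theorem natDegree_C_mul_sub_C_mul_of_monic (hf : f.Monic) (hg : g.Monic) (hfn : f.natDegree = n)
    (hgn : g.natDegree = n) {a b : R} (hab : a ≠ b) : (C a * f - C b * g).natDegree = n := by
  refine natDegree_eq_of_le_of_coeff_ne_zero ?_ ?_
  · refine (natDegree_sub_le _ _).trans (max_le ?_ ?_)
    · exact (natDegree_C_mul_le _ _).trans hfn.le
    · exact (natDegree_C_mul_le _ _).trans hgn.le
  · rw [coeff_C_mul_sub_C_mul_of_monic hf hg hfn hgn]
    exact sub_ne_zero.mpr hab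

theorem leadingCoeff_C_mul_sub_C_mul_of_monic (hf : f.Monic) (hg : g.Monic)
    (hfg : f.natDegree = g.natDegree) {a b : R} (hab : a ≠ b) :
    (C a * f - C b * g).leadingCoeff = a - b := by
  rw [leadingCoeff, natDegree_C_mul_sub_C_mul_of_monic hf hg rfl hfg.symm hab,
    coeff_C_mul_sub_C_mul_of_monic hf hg rfl hfg.symm]

end

end Polynomial

noncomputable def scaledRootPoly {R ι : Type*} [CommRing R] [Fintype ι] (μ : R) (α : ι → R) :
    R[X] :=
  C μ * ∏ i, (X - C (α i))

section scaledRootPoly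

variable {R ι : Type*} [CommRing R] [Fintype ι] {μ ν : R} {α β : ι → R}

@[simp]
theorem eval_scaledRootPoly (x : R) : (scaledRootPoly μ α).eval x = μ * ∏ i, (x - α i) := by
  simp [scaledRootPoly, eval_prod]

theorem eval_scaledRootPoly_self (i : ι) : (scaledRootPoly μ α).eval (α i) = 0 := by
  simp [prod_eq_zero (mem_univ i)]

variable [Nontrivial R]

theorem natDegree_scaledRootPoly_sub (hμν : μ ≠ ν) :
    (scaledRootPoly μ α - scaledRootPoly ν β).natDegree = Fintype.card ι :=
  natDegree_C_mul_sub_C_mul_of_monic (monic_prod_X_sub_C _ _) (monic_prod_X_sub_C _ _) (by simp)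
    (by simp) hμν

theorem leadingCoeff_scaledRootPoly_sub (hμν : μ ≠ ν) :
    (scaledRootPoly μ α - scaledRootPoly ν β).leadingCoeff = μ - ν :=
  leadingCoeff_C_mul_sub_C_mul_of_monic (monic_prod_X_sub_C _ _) (monic_prod_X_sub_C _ _) (by simp)
    hμν

end scaledRootPoly

section Interlace

variable {p : ℕ} {μ ν : ℝ} {α β : Fin p → ℝ}

/-- Under interlacing, `α i - β j` and `β (i + 1) - α j` have the same sign for every `j`. -/
theorem prod_sub_mul_prod_sub_pos_of_interlace (hα : Monotone α) (hβ : Monotone β)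
    (hβα : ∀ j, β j < α j) {i k : Fin p} (hik : (i : ℕ) + 1 = k) (hαβ : α i < β k) :
    0 < (∏ j, (α i - β j)) * ∏ j, (β k - α j) := by
  rw [← prod_mul_distrib]
  refine prod_pos fun j _ => ?_
  rcases le_or_gt j i with hji | hij
  · have := hβ hji
    have := hα hji
    have := hβα i
    exact mul_pos (by linarith) (by linarith)
  · have hkj : k ≤ j := Fin.le_def.mpr (by have := Fin.lt_def.mp hij; omega)
    have := hβ hkj
    have := hα hkj
    have := hβα k
    exact mul_pos_of_neg_of_neg (by linarith) (by linarith)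

theorem exists_isRoot_Ioo_scaledRootPoly_sub (hμν : 0 < μ * ν) {i k : Fin p} (hαβ : α i < β k)
    (hpos : 0 < (∏ j, (α i - β j)) * ∏ j, (β k - α j)) :
    ∃ x ∈ Set.Ioo (α i) (β k), (scaledRootPoly μ α - scaledRootPoly ν β).IsRoot x := by
  refine exists_mem_Ioo_eq_zero_of_mul_neg hαβ.le (Polynomial.continuous _).continuousOn ?_
  simp only [eval_sub, eval_scaledRootPoly_self, eval_scaledRootPoly]
  nlinarith

theorem exists_gt_isRoot_scaledRootPoly_sub (hνμ : 0 < ν * (μ - ν)) {i : Fin p}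
    (hβα : ∀ j, β j < α i) : ∃ x, α i < x ∧ (scaledRootPoly μ α - scaledRootPoly ν β).IsRoot x := by
  have hprod : 0 < ∏ j, (α i - β j) := prod_pos fun j _ => sub_pos.mpr (hβα j)
  refine exists_gt_isRoot_of_eval_mul_leadingCoeff_neg ?_
  rw [leadingCoeff_scaledRootPoly_sub (sub_ne_zero.mp (right_ne_zero_of_mul hνμ.ne'))]
  simp only [eval_sub, eval_scaledRootPoly_self, eval_scaledRootPoly]
  nlinarith

theorem strictMono_of_interlace {γ : Fin p → ℝ} (hα : Monotone α) (hβα : ∀ j, β j < α j)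
    (hαγ : ∀ i, α i < γ i) (hγβ : ∀ (i : Fin p) (h : (i : ℕ) + 1 < p), γ i < β ⟨(i : ℕ) + 1, h⟩) :
    StrictMono γ := fun i j hij => by
  have h : (i : ℕ) + 1 < p := by have := Fin.lt_def.mp hij; omega
  calc γ i < β ⟨(i : ℕ) + 1, h⟩ := hγβ i h
    _ < α ⟨(i : ℕ) + 1, h⟩ := hβα _
    _ ≤ α j := hα (Fin.le_def.mpr (Fin.lt_def.mp hij))
    _ < γ j := hαγ j

end Interlace

theorem mul_sub_pos_of_mul_pos_of_abs_lt {μ ν : ℝ} (hμν : 0 < μ * ν) (hlt : |ν| < |μ|) :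
    0 < ν * (μ - ν) := by
  rcases pos_and_pos_or_neg_and_neg_of_mul_pos hμν with ⟨hμ, hν⟩ | ⟨hμ, hν⟩
  · rw [abs_of_pos hμ, abs_of_pos hν] at hlt; nlinarith
  · rw [abs_of_neg hμ, abs_of_neg hν] at hlt; nlinarith

/-- Lemma `lemma1` (root localization): if `G ≪ F` and `|μ| > |ν|`, then `F − G` has
`p` distinct real roots `γ_1 < ⋯ < γ_p` with `γ_i ∈ (α_i, β_{i+1})` for `i < p` and
`γ_p > α_p`. -/
theorem stmt_10 (p : ℕ) (hp : 1 ≤ p) (μ ν : ℝ)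
    (α β : Fin p → ℝ) (hα : StrictMono α) (hβ : StrictMono β)
    (hsign : 0 < μ * ν)
    (hint1 : ∀ i, β i < α i)
    (hint2 : ∀ (i : Fin p) (h : (i : ℕ) + 1 < p), α i < β ⟨(i : ℕ) + 1, h⟩)
    (hlt : |ν| < |μ|) :
    ∃ γ : Fin p → ℝ, StrictMono γ ∧
      Polynomial.C μ * ∏ i, (Polynomial.X - Polynomial.C (α i)) -
          Polynomial.C ν * ∏ i, (Polynomial.X - Polynomial.C (β i)) =
        Polynomial.C (μ - ν) * ∏ i, (Polynomial.X - Polynomial.C (γ i)) ∧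
      (∀ (i : Fin p) (h : (i : ℕ) + 1 < p), α i < γ i ∧ γ i < β ⟨(i : ℕ) + 1, h⟩) ∧
      α ⟨p - 1, by omega⟩ < γ ⟨p - 1, by omega⟩ := by
  have hμν : μ ≠ ν := by rintro rfl; exact hlt.false
  have hroot : ∀ i : Fin p, ∃ x, α i < x ∧ (∀ h : (i : ℕ) + 1 < p, x < β ⟨(i : ℕ) + 1, h⟩) ∧
      (scaledRootPoly μ α - scaledRootPoly ν β).IsRoot x := by
    intro i
    by_cases h : (i : ℕ) + 1 < p
    · obtain ⟨x, hx, hx0⟩ := exists_isRoot_Ioo_scaledRootPoly_sub hsign (hint2 i h)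
        (prod_sub_mul_prod_sub_pos_of_interlace hα.monotone hβ.monotone hint1 rfl (hint2 i h))
      exact ⟨x, hx.1, fun _ => hx.2, hx0⟩
    · obtain ⟨x, hx, hx0⟩ := exists_gt_isRoot_scaledRootPoly_sub
        (mul_sub_pos_of_mul_pos_of_abs_lt hsign hlt)
        fun j => (hβ.monotone (Fin.le_def.mpr (by omega))).trans_lt (hint1 i)
      exact ⟨x, hx, fun h' => absurd h' h, hx0⟩
  choose γ hαγ hγβ hγ using hroot
  have hγmono := strictMono_of_interlace hα.monotone hint1 hαγ hγβ
  refine ⟨γ, hγmono, ?_, fun i h => ⟨hαγ i, hγβ i h⟩, hαγ _⟩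
  have := eq_C_leadingCoeff_mul_prod_X_sub_C hγmono.injective hγ
    (by rw [natDegree_scaledRootPoly_sub hμν, Fintype.card_fin])
  rwa [leadingCoeff_scaledRootPoly_sub hμν] at this
end

section
/- Let p > 1 be an integer, and let F(λ) = μ·∏_{i=1}^{p}(λ − α_i) and G(λ) = ν·∏_{i=1}^{p}(λ − β_i) be real polynomials of degree p with μ, ν ≠ 0, α_1 < ⋯ < α_p, β_1 < ⋯ < β_p, G ≪ F, and |μ| > |ν|, and let γ_1 < ⋯ < γ_p denote the p distinct real roots of F − G (which satisfy γ_i ∈ (α_i, β_{i+1}) for i < p and γ_p > α_p). For any η ∈ (0, min_{1≤i≤p−1}(α_{i+1} − α_i)), if |ν|/|μ| < min{1, (min_{1≤i≤p−1}(α_{i+1} − α_i) − η)^p}·min{1, η^p} / (2 + 2·max_{1≤j≤p}|∏_{i=1}^{p}(α_j − β_i)|), then max_{1≤i≤p}(γ_i − α_i) < η. -/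
/-!
Evaluating `F - G = (μ - ν) ∏ (λ - γ_i)` at a root `α_j` of `F` gives
`|μ - ν| ∏_i |α_j - γ_i| = |ν| |∏_i (α_j - β_i)| ≤ |ν| Mx`, which the hypothesis on `|ν| / |μ|`
makes small. By induction on `j`: if `γ_i < α_i + η` for `i < j` but `γ_j ≥ α_j + η`, then the
factor `i = j` is at least `η`, and every other factor is at least `δ - η` (for `i < j` because
`γ_i` stays `η`-close to `α_i`, for `i > j` because `γ_i > α_i ≥ α_j + δ`), so the product is
at least `min 1 ((δ - η) ^ p) * min 1 (η ^ p)`, a contradiction.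
-/

open Polynomial

theorem mul_prod_sub_eq_neg_mul_prod_sub_of_eq {R ι : Type*} [CommRing R] [Fintype ι]
    {μ ν c : R} {α β γ : ι → R}
    (h : C μ * ∏ i, (X - C (α i)) - C ν * ∏ i, (X - C (β i)) = C c * ∏ i, (X - C (γ i)))
    (j : ι) : c * ∏ i, (α j - γ i) = -(ν * ∏ i, (α j - β i)) := by
  have h := congrArg (eval (α j)) h
  simp only [eval_sub, eval_mul, eval_C, eval_prod, eval_X] at h
  rw [Finset.prod_eq_zero (Finset.mem_univ j) (sub_self _), mul_zero, zero_sub] at h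
  exact h.symm

theorem le_sub_of_mem_lowerBounds_consecutive_sub {p : ℕ} {α : Fin p → ℝ} (hα : Monotone α)
    {δ : ℝ} (hδ : δ ∈ lowerBounds (Set.range fun i : Fin (p - 1) =>
      α ⟨(i : ℕ) + 1, by have := i.isLt; omega⟩ - α ⟨(i : ℕ), by have := i.isLt; omega⟩))
    {i k : Fin p} (hik : i < k) : δ ≤ α k - α i := by
  have hi : (i : ℕ) < p - 1 := by omega
  have hstep := hδ (Set.mem_range_self (⟨i, hi⟩ : Fin (p - 1)))
  have hmono : α ⟨(i : ℕ) + 1, by omega⟩ ≤ α k := hα (Fin.mk_le_of_le_val hik)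
  simp only at hstep
  linarith

theorem min_one_pow_le_min_one_pow {x : ℝ} (hx : 0 ≤ x) {m n : ℕ} (hnm : n ≤ m) :
    min 1 (x ^ m) ≤ min 1 x ^ n := by
  rcases le_total x 1 with h | h
  · rw [min_eq_right h]
    exact (min_le_right _ _).trans (pow_le_pow_of_le_one hx h hnm)
  · rw [min_eq_left h, one_pow]
    exact min_le_left _ _

theorem Finset.mul_pow_card_sub_one_le_prod {ι R : Type*} [Fintype ι] [DecidableEq ι]
    [CommSemiring R] [PartialOrder R] [IsOrderedRing R] {f : ι → R} {a b : R} (j : ι)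
    (ha : 0 ≤ a) (hb : 0 ≤ b) (hj : a ≤ f j) (hne : ∀ i, i ≠ j → b ≤ f i) :
    a * b ^ (Fintype.card ι - 1) ≤ ∏ i, f i := by
  have hrest : b ^ (Fintype.card ι - 1) ≤ ∏ i ∈ univ.erase j, f i := by
    rw [← card_univ, ← card_erase_of_mem (mem_univ j), ← prod_const]
    exact prod_le_prod (fun _ _ => hb) fun i hi => hne i (ne_of_mem_erase hi)
  rw [← mul_prod_erase univ f (mem_univ j)]
  exact mul_le_mul hj hrest (pow_nonneg hb _) (ha.trans hj)

theorem min_one_pow_mul_min_one_pow_le_prod_abs_sub {ι : Type*} [Fintype ι] [LinearOrder ι]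
    {α γ : ι → ℝ} {δ η : ℝ} (hη : 0 < η) (hηδ : η < δ)
    (hgap : ∀ i k, i < k → δ ≤ α k - α i) (hαγ : ∀ i, α i < γ i)
    {j : ι} (hprev : ∀ i < j, γ i - α i < η) (hj : η ≤ γ j - α j) :
    min 1 ((δ - η) ^ Fintype.card ι) * min 1 (η ^ Fintype.card ι) ≤ ∏ i, |α j - γ i| := by
  classical
  have hcard : 1 ≤ Fintype.card ι := Fintype.card_pos_iff.mpr ⟨j⟩
  have hfar : ∀ i, i ≠ j → min 1 (δ - η) ≤ |α j - γ i| := by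
    intro i hij
    refine (min_le_right _ _).trans ?_
    rcases hij.lt_or_gt with hij | hij
    · have := hgap i j hij
      have := hprev i hij
      rw [abs_of_pos (by linarith)]
      linarith
    · have := hgap j i hij
      have := hαγ i
      rw [abs_sub_comm, abs_of_pos (by linarith)]
      linarith
  have hnear : min 1 (η ^ Fintype.card ι) ≤ |α j - γ j| := by
    have := min_one_pow_le_min_one_pow hη.le hcard
    rw [pow_one] at this
    rw [abs_sub_comm, abs_of_pos (by linarith)]
    linarith [min_le_right 1 η]
  calc min 1 ((δ - η) ^ Fintype.card ι) * min 1 (η ^ Fintype.card ι)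
      ≤ min 1 (η ^ Fintype.card ι) * min 1 (δ - η) ^ (Fintype.card ι - 1) := by
        rw [mul_comm]
        gcongr
        exact min_one_pow_le_min_one_pow (by linarith) (Nat.sub_le _ _)
    _ ≤ ∏ i, |α j - γ i| :=
        Finset.mul_pow_card_sub_one_le_prod j (by positivity)
          (le_min zero_le_one (by linarith)) hnear hfar

theorem abs_mul_lt_abs_sub_mul {a b m M : ℝ} (ha : 0 < |a|) (hm : 0 ≤ m) (hm1 : m ≤ 1)
    (hM : 0 ≤ M) (hbound : |b| / |a| < m / (2 + 2 * M)) : |b| * M < |a - b| * m := by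
  rw [div_lt_div_iff₀ ha (by positivity)] at hbound
  have : (|a| - |b|) * m ≤ |a - b| * m := by
    gcongr
    exact abs_sub_abs_le_abs_sub a b
  nlinarith [abs_nonneg b]

/-- Lemma `lemma1`(i): quantitative root localization for `p > 1`. Here `δ` is
`min_{1≤i≤p−1}(α_{i+1} − α_i)` and `Mx` is `max_{1≤j≤p} |∏_i (α_j − β_i)|`. -/
theorem stmt_11 (p : ℕ) (hp : 1 < p) (μ ν : ℝ)
    (α β γ : Fin p → ℝ) (hα : StrictMono α)
    (hlt : |ν| < |μ|)
    (hroots : Polynomial.C μ * ∏ i, (Polynomial.X - Polynomial.C (α i)) -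
          Polynomial.C ν * ∏ i, (Polynomial.X - Polynomial.C (β i)) =
        Polynomial.C (μ - ν) * ∏ i, (Polynomial.X - Polynomial.C (γ i)))
    (hγloc : (∀ (i : Fin p) (h : (i : ℕ) + 1 < p), α i < γ i ∧ γ i < β ⟨(i : ℕ) + 1, h⟩) ∧
      α ⟨p - 1, by omega⟩ < γ ⟨p - 1, by omega⟩)
    (δ Mx : ℝ)
    (hδ : IsLeast (Set.range fun i : Fin (p - 1) =>
      α ⟨(i : ℕ) + 1, by have := i.isLt; omega⟩ - α ⟨(i : ℕ), by have := i.isLt; omega⟩) δ)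
    (hMx : IsGreatest (Set.range fun j : Fin p => |∏ i, (α j - β i)|) Mx)
    (η : ℝ) (hη1 : 0 < η) (hη2 : η < δ)
    (hbound : |ν| / |μ| <
      min 1 ((δ - η) ^ p) * min 1 (η ^ p) / (2 + 2 * Mx)) :
    ∀ i, γ i - α i < η := by
  have hαγ : ∀ i, α i < γ i := by
    intro i
    by_cases hi : (i : ℕ) + 1 < p
    · exact (hγloc.1 i hi).1
    · have : i = ⟨p - 1, by omega⟩ := Fin.ext (by simp only; omega)
      exact this ▸ hγloc.2
  have hgap : ∀ i k, i < k → δ ≤ α k - α i := fun i k =>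
    le_sub_of_mem_lowerBounds_consecutive_sub hα.monotone hδ.2
  have hMx0 : 0 ≤ Mx := by
    obtain ⟨j, rfl⟩ := hMx.1
    positivity
  intro j
  induction j using WellFoundedLT.induction with
  | _ j hprev =>
    by_contra! hj
    have hlow := min_one_pow_mul_min_one_pow_le_prod_abs_sub hη1 hη2 hgap hαγ hprev hj
    rw [Fintype.card_fin] at hlow
    have hrow := congrArg abs (mul_prod_sub_eq_neg_mul_prod_sub_of_eq hroots j)
    rw [abs_neg, abs_mul, abs_mul, Finset.abs_prod] at hrow
    refine (abs_mul_lt_abs_sub_mul (b := ν) ((abs_nonneg ν).trans_lt hlt) (by positivity)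
      (mul_le_one₀ (min_le_left _ _) (by positivity) (min_le_left _ _)) hMx0 hbound).not_ge ?_
    calc |μ - ν| * (min 1 ((δ - η) ^ p) * min 1 (η ^ p))
        ≤ |μ - ν| * ∏ i, |α j - γ i| := by gcongr
      _ = |ν| * |∏ i, (α j - β i)| := hrow
      _ ≤ |ν| * Mx := by gcongr; exact hMx.2 (Set.mem_range_self j)
end

section
/- Let F(λ) = (λ − α_1)(λ − α_2) and G(λ) = λ − β_1 be real polynomials whose roots satisfy α_2 ∈ [λ_2, Λ), λ_1 ≤ α_1, α_1 + C_1^n·ρ_1 < β_1, β_1 < λ_1 + (1 + C_2(1))^n·ρ_1, and λ_1 + (1 + C_2(1))^n·ρ_1 < λ_2. Let M > 0 and let μ, ν, m* be real numbers with 0 < m* < M and −μ/ν > C·M. Then there exist real numbers λ* > 0, b* > 0, α'_1 ∈ (α_1, λ_2), and μ_0, ν_0 with −μ_0/ν_0 > −μ/ν − m* such that the polynomials F_0(λ) = λ − α'_1 and G_0(λ) = 1 satisfy the identities μ·F(λ) = −m*·ν·λ·G(λ) + b*·μ_0·(λ* − λ)·F_0(λ) and ν·G(λ) = μ_0·F_0(λ)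 + b*·ν_0·(λ* − λ)·G_0(λ) in ℝ[λ]. -/
open Polynomial

/-- `Δ = (1/2)·min{1, min_{1≤i≤m−1}(λ_{i+1} − λ_i)}`. -/
noncomputable def Del (m : ℕ) (lam : ℕ → ℝ) : ℝ :=
  (1 / 2) * min 1 (sInf ((fun i => lam (i + 1) - lam i) '' Set.Icc 1 (m - 1)))

/-- `Λ = 1 + λ_m`. -/
noncomputable def Lamb (m : ℕ) (lam : ℕ → ℝ) : ℝ := 1 + lam m

/-- `ε = Δ^{n²+n+1}/(n·2^{3(n+1)³}·Λ^{(n+1)²})`. -/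
noncomputable def eps (n m : ℕ) (lam : ℕ → ℝ) : ℝ :=
  Del m lam ^ (n ^ 2 + n + 1) /
    ((n : ℝ) * 2 ^ (3 * (n + 1) ^ 3) * Lamb m lam ^ ((n + 1) ^ 2))

/-- `ρ_i = ε^{(n+1)^{m−i}}`. -/
noncomputable def rho (n m : ℕ) (lam : ℕ → ℝ) (i : ℕ) : ℝ :=
  eps n m lam ^ ((n + 1) ^ (m - i))

/-- `C_1 = Δ/(2^{n+1}Λ)`. -/
noncomputable def Cone (n m : ℕ) (lam : ℕ → ℝ) : ℝ :=
  Del m lam / (2 ^ (n + 1) * Lamb m lam)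

/-- `C_2(j) = 2^{2(n+1)²}·Λ^{n+1}/(Δ^n·ε^{(n+1)^{m−j−1}})`. -/
noncomputable def Ctwo (n m : ℕ) (lam : ℕ → ℝ) (j : ℕ) : ℝ :=
  2 ^ (2 * (n + 1) ^ 2) * Lamb m lam ^ (n + 1) /
    (Del m lam ^ n * eps n m lam ^ ((n + 1) ^ (m - j - 1)))

/-- `C = 2^{2n+1}(1 + Λ^n)/(C_1^{2n²}·ρ_1^{2n})`. -/
noncomputable def CC (n m : ℕ) (lam : ℕ → ℝ) : ℝ :=
  2 ^ (2 * n + 1) * (1 + Lamb m lam ^ n) /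
    (Cone n m lam ^ (2 * n ^ 2) * rho n m lam 1 ^ (2 * n))

/-!
`μ F + m* ν λ G` is a quadratic with leading coefficient `c = μ + m* ν`, and since `C ≥ 1` the
hypothesis gives `-μ/ν > C M ≥ M > m*`, which makes `c` of sign opposite to `ν` and equal to that of `μ`. Hence
it takes at `β₁` the sign opposite to `c` and at `α₁ > 0` the sign of `c`, so it factors as
`c (λ - α₁') (λ - λ*)` with `α₁ < α₁' < β₁ < λ*`; this gives the first identity with
`b* μ₀ = -c`. The second identity is Lagrange interpolation of the linear polynomial `ν G` at
the nodes `α₁'` and `λ*`, and `-μ₀/ν₀ = (-c/ν)(λ* - α₁')/(β₁ - α₁') > -c/ν = -μ/ν - m*`.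
-/

theorem exists_roots_of_monic_quadratic_neg {S P t : ℝ} (h : t ^ 2 - S * t + P < 0) :
    ∃ r₁ r₂, r₁ < t ∧ t < r₂ ∧ ∀ x, x ^ 2 - S * x + P = (x - r₁) * (x - r₂) := by
  have hD : 0 < S ^ 2 - 4 * P := by nlinarith [sq_nonneg (2 * t - S)]
  set s := Real.sqrt (S ^ 2 - 4 * P)
  have hs : 0 < s := Real.sqrt_pos.mpr hD
  have hs2 : s ^ 2 = S ^ 2 - 4 * P := Real.sq_sqrt hD.le
  have hfac : ∀ x, x ^ 2 - S * x + P = (x - (S - s) / 2) * (x - (S + s) / 2) := fun x => by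
    linear_combination (1 / 4 : ℝ) * hs2
  have ht := hfac t
  refine ⟨(S - s) / 2, (S + s) / 2, ?_, ?_, hfac⟩ <;> nlinarith

theorem exists_roots_of_mul_quadratic_neg {a b d t : ℝ} (h : a * (a * t ^ 2 + b * t + d) < 0) :
    ∃ r₁ r₂, r₁ < t ∧ t < r₂ ∧ ∀ x, a * x ^ 2 + b * x + d = a * (x - r₁) * (x - r₂) := by
  have ha : a ≠ 0 := by rintro rfl; simp at h
  have hmonic : t ^ 2 - (-b / a) * t + d / a < 0 := by
    have : t ^ 2 - (-b / a) * t + d / a = a * (a * t ^ 2 + b * t + d) / a ^ 2 := by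
      field_simp; ring
    rw [this]
    exact div_neg_of_neg_of_pos h (by positivity)
  obtain ⟨r₁, r₂, h₁, h₂, hfac⟩ := exists_roots_of_monic_quadratic_neg hmonic
  refine ⟨r₁, r₂, h₁, h₂, fun x => ?_⟩
  rw [mul_assoc, ← hfac]
  field_simp
  ring

theorem exists_interlaced_roots_of_combination {μ ν mstar α₁ α₂ β₁ : ℝ} (hα₁ : 0 < α₁) (hαβ : α₁ < β₁)
    (hβα : β₁ < α₂) (hmstar : 0 < mstar) (hcν : (μ + mstar * ν) * ν < 0) :
    ∃ α₁' lamstar, α₁ < α₁' ∧ α₁' < β₁ ∧ β₁ < lamstar ∧ ∀ x,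
      μ * ((x - α₁) * (x - α₂)) + mstar * ν * x * (x - β₁) =
        (μ + mstar * ν) * (x - α₁') * (x - lamstar) := by
  set c := μ + mstar * ν
  have hcμ : 0 < c * μ := by
    have : c * μ = c ^ 2 - mstar * (c * ν) := by ring
    nlinarith [sq_nonneg c]
  obtain ⟨r₁, r₂, h₁, h₂, hfac⟩ := exists_roots_of_mul_quadratic_neg
    (a := c) (b := -(μ * (α₁ + α₂) + mstar * ν * β₁)) (d := μ * (α₁ * α₂)) (t := β₁) (by
      have : c * (c * β₁ ^ 2 + -(μ * (α₁ + α₂) + mstar * ν * β₁) * β₁ + μ * (α₁ * α₂))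
          = c * μ * ((β₁ - α₁) * (β₁ - α₂)) := by ring
      rw [this]
      exact mul_neg_of_pos_of_neg hcμ (mul_neg_of_pos_of_neg (by linarith) (by linarith)))
  have hQ : ∀ x, μ * ((x - α₁) * (x - α₂)) + mstar * ν * x * (x - β₁) = c * (x - r₁) * (x - r₂) :=
    fun x => by rw [← hfac]; ring
  have hr₁ : α₁ < r₁ := by
    have hval : c ^ 2 * ((α₁ - r₁) * (α₁ - r₂)) = mstar * (c * ν) * α₁ * (α₁ - β₁) := by
      linear_combination -c * hQ α₁
    have hsign : 0 < mstar * (c * ν) * α₁ * (α₁ - β₁) :=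
      mul_pos_of_neg_of_neg (mul_neg_of_neg_of_pos (mul_neg_of_pos_of_neg hmstar hcν) hα₁)
        (by linarith)
    have hprod : 0 < (α₁ - r₁) * (α₁ - r₂) :=
      pos_of_mul_pos_right (hval ▸ hsign) (sq_nonneg c)
    nlinarith
  exact ⟨r₁, r₂, hr₁, h₁, h₂, hQ⟩

section Constants

variable {n m : ℕ} {lam : ℕ → ℝ}

theorem Del_le_half : Del m lam ≤ 1 / 2 := by
  unfold Del
  linarith [min_le_left (1 : ℝ) (sInf ((fun i => lam (i + 1) - lam i) '' Set.Icc 1 (m - 1)))]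

theorem Del_pos (hm : 2 ≤ m) (hmono : ∀ i, 1 ≤ i → i < m → lam i < lam (i + 1)) :
    0 < Del m lam := by
  have hne : ((fun i => lam (i + 1) - lam i) '' Set.Icc 1 (m - 1)).Nonempty :=
    ⟨_, Set.mem_image_of_mem _ (Set.left_mem_Icc.mpr (by omega))⟩
  obtain ⟨i, hi, hinf⟩ := hne.csInf_mem ((Set.finite_Icc _ _).image _)
  have hgap : 0 < lam (i + 1) - lam i := sub_pos.mpr (hmono i hi.1 (by grind))
  unfold Del
  rw [← hinf]
  exact mul_pos (by norm_num) (lt_min one_pos hgap)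

theorem one_lt_Lamb (hm : 1 ≤ m) (hpos : 0 < lam 1)
    (hmono : ∀ i, 1 ≤ i → i < m → lam i < lam (i + 1)) : 1 < Lamb m lam := by
  have hmonoOn : StrictMonoOn lam (Set.Icc 1 m) :=
    strictMonoOn_of_lt_succ Set.ordConnected_Icc fun a _ ha hsucc => by
      rw [Order.succ_eq_add_one] at hsucc ⊢
      exact hmono a ha.1 (by grind)
  have := hmonoOn.monotoneOn (Set.left_mem_Icc.mpr hm) (Set.right_mem_Icc.mpr hm) hm
  unfold Lamb
  linarith

variable (hn : 1 ≤ n) (hΔ : 0 < Del m lam) (hΛ : 1 ≤ Lamb m lam)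
include hn hΔ hΛ

theorem eps_pos : 0 < eps n m lam := by
  have : (0 : ℝ) < n := by exact_mod_cast hn
  have : 0 < Lamb m lam := by linarith
  unfold eps
  positivity

theorem eps_le_one : eps n m lam ≤ 1 := by
  have hn' : (1 : ℝ) ≤ n := by exact_mod_cast hn
  unfold eps
  rw [div_le_one (by positivity)]
  calc Del m lam ^ (n ^ 2 + n + 1) ≤ 1 := pow_le_one₀ hΔ.le (Del_le_half.trans (by norm_num))
    _ ≤ (n : ℝ) * 2 ^ (3 * (n + 1) ^ 3) * Lamb m lam ^ ((n + 1) ^ 2) :=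
      one_le_mul_of_one_le_of_one_le
        (one_le_mul_of_one_le_of_one_le hn' (one_le_pow₀ one_le_two)) (one_le_pow₀ hΛ)

omit hn in
theorem Cone_pos : 0 < Cone n m lam := by
  have : 0 < Lamb m lam := by linarith
  unfold Cone
  positivity

omit hn hΔ in
theorem Cone_le_one : Cone n m lam ≤ 1 := by
  unfold Cone
  rw [div_le_one (by positivity)]
  calc Del m lam ≤ 1 := Del_le_half.trans (by norm_num)
    _ ≤ 2 ^ (n + 1) * Lamb m lam := one_le_mul_of_one_le_of_one_le (one_le_pow₀ one_le_two) hΛ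

theorem one_le_CC : 1 ≤ CC n m lam := by
  have hε := eps_pos hn hΔ hΛ
  have hρ : 0 < rho n m lam 1 := pow_pos hε _
  have hρ₁ : rho n m lam 1 ≤ 1 := pow_le_one₀ hε.le (eps_le_one hn hΔ hΛ)
  have hC₁ := Cone_pos (n := n) hΔ hΛ
  have : 0 < Lamb m lam := by linarith
  unfold _root_.CC
  rw [le_div_iff₀ (by positivity), one_mul]
  calc Cone n m lam ^ (2 * n ^ 2) * rho n m lam 1 ^ (2 * n) ≤ 1 :=
        mul_le_one₀ (pow_le_one₀ hC₁.le (Cone_le_one hΛ)) (by positivity)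
          (pow_le_one₀ hρ.le hρ₁)
    _ ≤ 2 ^ (2 * n + 1) * (1 + Lamb m lam ^ n) :=
        one_le_mul_of_one_le_of_one_le (one_le_pow₀ one_le_two)
          (le_add_of_nonneg_right (by positivity))

end Constants

theorem exists_decomposition_quadratic_linear {μ ν mstar α₁ α₂ β₁ : ℝ} (hα₁ : 0 < α₁) (hαβ : α₁ < β₁)
    (hβα : β₁ < α₂) (hmstar : 0 < mstar) (hν : ν ≠ 0) (hμν : mstar < -μ / ν) :
    ∃ (lamstar bstar α₁' μ₀ ν₀ : ℝ),
      0 < lamstar ∧ 0 < bstar ∧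
      α₁ < α₁' ∧ α₁' < β₁ ∧
      -μ₀ / ν₀ > -μ / ν - mstar ∧
      C μ * ((X - C α₁) * (X - C α₂)) =
        -(C mstar * C ν) * X * (X - C β₁) + C bstar * C μ₀ * (C lamstar - X) * (X - C α₁') ∧
      C ν * (X - C β₁) = C μ₀ * (X - C α₁') + C bstar * C ν₀ * (C lamstar - X) * 1 := by
  set c := μ + mstar * ν
  have hκ : -c / ν = -μ / ν - mstar := by field_simp; ring
  have hκpos : 0 < -c / ν := by rw [hκ]; linarith
  have hcν : c * ν < 0 := by
    have : c * ν = -(-c / ν * ν ^ 2) := by field_simp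
    rw [this]
    exact neg_neg_of_pos (mul_pos hκpos (by positivity))
  obtain ⟨α₁', lamstar, h₁, h₂, h₃, hQ⟩ :=
    exists_interlaced_roots_of_combination hα₁ hαβ hβα hmstar hcν
  -- the linear polynomial `ν (x - β₁)` interpolated at the nodes `α₁'` and `lamstar`
  set μ₀ := ν * (lamstar - β₁) / (lamstar - α₁')
  set B := ν * (α₁' - β₁) / (lamstar - α₁')
  have hnode₁ : lamstar - α₁' ≠ 0 := by linarith
  have hnode₂ : lamstar - β₁ ≠ 0 := by linarith
  have hμ₀ : μ₀ ≠ 0 := div_ne_zero (mul_ne_zero hν hnode₂) hnode₁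
  have hgap : α₁' - β₁ ≠ 0 := (sub_neg.mpr h₂).ne
  have hgap' : β₁ - α₁' ≠ 0 := (sub_pos.mpr h₂).ne'
  have hL : ∀ x, ν * (x - β₁) = μ₀ * (x - α₁') + B * (lamstar - x) := fun x => by
    simp only [μ₀, B]; field_simp; ring
  set bstar := -c / μ₀
  have hb : bstar = -c / ν * ((lamstar - α₁') / (lamstar - β₁)) := by
    simp only [bstar, μ₀]; field_simp
  have hbpos : 0 < bstar := by
    rw [hb]; exact mul_pos hκpos (div_pos (by linarith) (by linarith))
  have hbμ₀ : bstar * μ₀ = -c := div_mul_cancel₀ _ hμ₀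
  have hbν₀ : bstar * (B / bstar) = B := mul_div_cancel₀ _ hbpos.ne'
  have hratio : -μ₀ / (B / bstar) = -c / ν * ((lamstar - α₁') / (β₁ - α₁')) := by
    rw [div_div_eq_mul_div, neg_mul, mul_comm μ₀, hbμ₀, neg_neg]
    simp only [B]
    field_simp
    ring
  refine ⟨lamstar, bstar, α₁', μ₀, B / bstar, by linarith, hbpos, h₁, h₂, ?_, ?_, ?_⟩
  · rw [hratio, ← hκ]
    exact lt_mul_of_one_lt_right hκpos ((one_lt_div (by linarith)).mpr (by linarith))
  · refine Polynomial.funext fun x => ?_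
    simp only [eval_mul, eval_add, eval_neg, eval_sub, eval_C, eval_X, hbμ₀]
    linear_combination hQ x
  · refine Polynomial.funext fun x => ?_
    simp only [eval_mul, eval_add, eval_sub, eval_C, eval_X, hbν₀, mul_one]
    exact hL x

/-- Lemma `cas1`(ii): the case `p = 2`. -/
theorem stmt_15 (n m : ℕ) (hm : 2 ≤ m) (hmn : m ≤ n) (lam : ℕ → ℝ)
    (hpos : 0 < lam 1) (hmono : ∀ i, 1 ≤ i → i < m → lam i < lam (i + 1))
    (α₁ α₂ β₁ : ℝ)
    (hα₂ : lam 2 ≤ α₂ ∧ α₂ < Lamb m lam)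
    (hα₁ : lam 1 ≤ α₁)
    (hβ₁ : α₁ + Cone n m lam ^ n * rho n m lam 1 < β₁ ∧
      β₁ < lam 1 + (1 + Ctwo n m lam 1) ^ n * rho n m lam 1 ∧
      lam 1 + (1 + Ctwo n m lam 1) ^ n * rho n m lam 1 < lam 2)
    (MM μ ν mstar : ℝ) (hMM : 0 < MM) (hms : 0 < mstar ∧ mstar < MM)
    (hν : ν ≠ 0) (hμν : -μ / ν > CC n m lam * MM) :
    ∃ (lamstar bstar α₁' μ₀ ν₀ : ℝ),
      0 < lamstar ∧ 0 < bstar ∧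
      α₁ < α₁' ∧ α₁' < lam 2 ∧
      -μ₀ / ν₀ > -μ / ν - mstar ∧
      Polynomial.C μ * ((Polynomial.X - Polynomial.C α₁) * (Polynomial.X - Polynomial.C α₂)) =
        -(Polynomial.C mstar * Polynomial.C ν) * Polynomial.X *
            (Polynomial.X - Polynomial.C β₁) +
          Polynomial.C bstar * Polynomial.C μ₀ * (Polynomial.C lamstar - Polynomial.X) *
            (Polynomial.X - Polynomial.C α₁') ∧
      Polynomial.C ν * (Polynomial.X - Polynomial.C β₁) =
        Polynomial.C μ₀ * (Polynomial.X - Polynomial.C α₁') +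
          Polynomial.C bstar * Polynomial.C ν₀ * (Polynomial.C lamstar - Polynomial.X) * 1 := by
  have hn : 1 ≤ n := by omega
  have hΔ := Del_pos hm hmono
  have hΛ := (one_lt_Lamb (by omega) hpos hmono).le
  have hαβ : α₁ < β₁ := by
    have : 0 < Cone n m lam ^ n * rho n m lam 1 :=
      mul_pos (pow_pos (Cone_pos hΔ hΛ) n) (pow_pos (eps_pos hn hΔ hΛ) _)
    linarith [hβ₁.1]
  have hβ₂ : β₁ < lam 2 := hβ₁.2.1.trans hβ₁.2.2
  have hmstar : mstar < -μ / ν := by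
    nlinarith [one_le_CC hn hΔ hΛ]
  obtain ⟨lamstar, bstar, α₁', μ₀, ν₀, hlam, hb, h₁, h₂, hratio, hF, hG⟩ :=
    exists_decomposition_quadratic_linear (hpos.trans_le hα₁) hαβ (hβ₂.trans_le hα₂.1) hms.1 hν hmstar
  exact ⟨lamstar, bstar, α₁', μ₀, ν₀, hlam, hb, h₁, h₂.trans hβ₂, hratio, hF, hG⟩
end

section
/- Let λ* and α_1 be real numbers with λ_1 ≤ α_1 < λ* < Λ, and let μ, ν be real numbers with μ/ν < 0. Set F(λ) = λ − α_1 and G(λ) = 1. Then there exist real numbers m* > 0, b* > 0 and μ_0, ν_0 with −μ_0/ν_0 > −(λ_1/Λ)·(μ/ν) such that the polynomials F_0(λ) = λ − λ* and G_0(λ) = 1 satisfy the identities μ·F(λ) = −m*·ν·λ·G(λ) − b*·μ_0·F_0(λ) and ν·(λ − λ*)·G(λ) = μ_0·F_0(λ) + b*·ν_0·(λ* − λ)·G_0(λ) in ℝ[λ]. -/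
open Polynomial

/-!
All polynomials involved have degree at most one, so both identities amount to matching
coefficients. The second one says `ν = μ₀ - b* ν₀`; the first says `b* μ₀ λ* = -μ α₁` and
`m* ν = -μ - b* μ₀`. Writing `μ = -s ν` with `s = -μ/ν > 0`, the choice `μ₀ = ν/2`,
`b* = 2 s α₁/λ*` solves them with `m* = s (λ* - α₁)/λ* > 0` and `-μ₀/ν₀ = b*`, and
`b* > s α₁/λ* > s λ₁/Λ` because `λ₁ ≤ α₁` and `λ* < Λ`.
-/

theorem C_mul_X_sub_C_eq_of_coeff_eq {R : Type*} [CommRing R] {a α p q l : R}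
    (hX : a = p - q) (h0 : q * l = -(a * α)) :
    C a * (X - C α) = C p * X - C q * (X - C l) := by
  have hX' : (C a : R[X]) = C p - C q := by rw [hX, map_sub]
  have h0' : (C q : R[X]) * C l = -(C a * C α) := by rw [← map_mul, h0, map_neg, map_mul]
  linear_combination X * hX' - h0'

theorem div_lt_div_of_pos_of_le_of_lt {K : Type*} [Field K] [LinearOrder K]
    [IsStrictOrderedRing K] {a b c d : K} (ha : 0 < a) (hab : a ≤ b) (hd : 0 < d)
    (hdc : d < c) : a / c < b / d :=
  calc a / c < a / d := div_lt_div_of_pos_left ha hd hdc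
    _ ≤ b / d := div_le_div_of_nonneg_right hab hd.le

theorem stmt_17_general (m : ℕ) (lam : ℕ → ℝ)
    (hpos : 0 < lam 1)
    (α₁ lamstar : ℝ) (hα₁ : lam 1 ≤ α₁) (h₁ : α₁ < lamstar) (h₂ : lamstar < 1 + lam m)
    (μ ν : ℝ) (hμν : μ / ν < 0) :
    ∃ mstar bstar μ₀ ν₀ : ℝ,
      0 < mstar ∧ 0 < bstar ∧
      -μ₀ / ν₀ > -(lam 1 / (1 + lam m)) * (μ / ν) ∧
      Polynomial.C μ * (Polynomial.X - Polynomial.C α₁) =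
        -(Polynomial.C mstar * Polynomial.C ν) * Polynomial.X * 1 -
          Polynomial.C bstar * Polynomial.C μ₀ * (Polynomial.X - Polynomial.C lamstar) ∧
      Polynomial.C ν * (Polynomial.X - Polynomial.C lamstar) * 1 =
        Polynomial.C μ₀ * (Polynomial.X - Polynomial.C lamstar) +
          Polynomial.C bstar * Polynomial.C ν₀ * (Polynomial.C lamstar - Polynomial.X) * 1 := by
  have hν : ν ≠ 0 := by rintro rfl; simp at hμν
  have hα : 0 < α₁ := hpos.trans_le hα₁
  have hl : 0 < lamstar := hα.trans h₁
  set s := -(μ / ν) with hs_def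
  have hs : 0 < s := neg_pos.mpr hμν
  have hμ : μ = -(s * ν) := by rw [hs_def]; field_simp
  set b := 2 * (s * (α₁ / lamstar)) with hb_def
  have hb : 0 < b := by positivity
  refine ⟨s * (lamstar - α₁) / lamstar, b, ν / 2, -ν / (2 * b),
    div_pos (mul_pos hs (sub_pos.mpr h₁)) hl, hb, ?_, ?_, ?_⟩
  · have hratio : -(ν / 2) / (-ν / (2 * b)) = b := by field_simp
    have hcmp : lam 1 / (1 + lam m) < α₁ / lamstar :=
      div_lt_div_of_pos_of_le_of_lt hpos hα₁ hl h₂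
    have hrhs : -(lam 1 / (1 + lam m)) * (μ / ν) = s * (lam 1 / (1 + lam m)) := by ring
    rw [hratio, hrhs]
    linarith [mul_lt_mul_of_pos_left hcmp hs]
  · convert C_mul_X_sub_C_eq_of_coeff_eq (p := -(s * (lamstar - α₁) / lamstar * ν))
      (q := b * (ν / 2)) (l := lamstar) ?_ ?_ using 1
    · simp only [map_neg, map_mul, mul_one]
    · rw [hμ, hb_def]; field_simp; ring
    · rw [hμ, hb_def]; field_simp
  · have hcoeff : (C ν : ℝ[X]) = C (ν / 2) - C b * C (-ν / (2 * b)) := by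
      rw [← map_mul, ← map_sub]; congr 1; field_simp; ring
    linear_combination (X - C lamstar) * hcoeff

/-- Lemma `cas2`(ii): the case `F(λ) = λ − α₁`, `G(λ) = 1`; here `Λ = 1 + λ_m`. -/
theorem stmt_17 (n m : ℕ) (hm : 2 ≤ m) (hmn : m ≤ n) (lam : ℕ → ℝ)
    (hpos : 0 < lam 1) (hmono : ∀ i, 1 ≤ i → i < m → lam i < lam (i + 1))
    (α₁ lamstar : ℝ) (hα₁ : lam 1 ≤ α₁) (h₁ : α₁ < lamstar) (h₂ : lamstar < 1 + lam m)
    (μ ν : ℝ) (hν : ν ≠ 0) (hμν : μ / ν < 0) :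
    ∃ mstar bstar μ₀ ν₀ : ℝ,
      0 < mstar ∧ 0 < bstar ∧
      -μ₀ / ν₀ > -(lam 1 / (1 + lam m)) * (μ / ν) ∧
      Polynomial.C μ * (Polynomial.X - Polynomial.C α₁) =
        -(Polynomial.C mstar * Polynomial.C ν) * Polynomial.X * 1 -
          Polynomial.C bstar * Polynomial.C μ₀ * (Polynomial.X - Polynomial.C lamstar) ∧
      Polynomial.C ν * (Polynomial.X - Polynomial.C lamstar) * 1 =
        Polynomial.C μ₀ * (Polynomial.X - Polynomial.C lamstar) +
          Polynomial.C bstar * Polynomial.C ν₀ * (Polynomial.C lamstar - Polynomial.X) * 1 :=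
  stmt_17_general m lam hpos α₁ lamstar hα₁ h₁ h₂ μ ν hμν
end
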